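/- Let μ and ν be probability distributions on a finite set Ω and let |r| < 1/2. Then D_KL( (1/2)μ + (1/2)ν ‖ ((1+r)/2)μ + ((1-r)/2)ν ) ≤ (r²/2)·(D_KL(μ ‖ ν) + D_KL(ν ‖ μ)). -/

import Mathlib

/-!
Put `m = (μ + ν)/2` and `X = r (μ - ν)/(μ + ν)`, so that the biased mixture is `m (1 + X)` with
`|X| ≤ |r| ≤ 1/2`. Pointwise `-m ln (1 + X) ≤ m (X² - X)`; the linear part `-r (μ - ν)/2` sums to
zero because `μ` and `ν` have the same mass, and the quadratic part `r²/2 · (μ - ν)²/(μ + ν)` is at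
most `r²/2 · (μ - ν) ln (μ/ν)`, whose sum is `r²/2 · ln 2 · (D_KL(μ‖ν) + D_KL(ν‖μ))`.
-/

namespace Real

theorem abs_log_one_add_sub_self_le {x : ℝ} (hx : |x| < 1) :
    |log (1 + x) - x| ≤ x ^ 2 * (1 - |x|)⁻¹ / 2 := by
  have h1x : 0 ≤ 1 + x := by linarith [neg_abs_le x]
  have hz : ‖(x : ℂ)‖ < 1 := by rwa [Complex.norm_real, norm_eq_abs]
  have h := Complex.norm_log_one_add_sub_self_le hz
  rwa [← Complex.ofReal_one, ← Complex.ofReal_add, ← Complex.ofReal_log h1x,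
    ← Complex.ofReal_sub, Complex.norm_real, norm_eq_abs, Complex.norm_real, norm_eq_abs,
    sq_abs] at h

theorem sub_sq_le_log_one_add {x : ℝ} (hx : |x| ≤ 1 / 2) : x - x ^ 2 ≤ log (1 + x) := by
  have hinv : (1 - |x|)⁻¹ ≤ 2 := by
    rw [inv_le_comm₀ (by linarith) two_pos]; linarith
  have hbound : |log (1 + x) - x| ≤ x ^ 2 :=
    (abs_log_one_add_sub_self_le (hx.trans_lt (by norm_num))).trans <| by
      nlinarith [mul_le_mul_of_nonneg_left hinv (sq_nonneg x)]
  linarith [(abs_le.mp hbound).1]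

end Real

open Real

theorem sq_sub_div_add_le_sub_mul_log_div {a b : ℝ} (ha : 0 < a) (hb : 0 < b) :
    (a - b) ^ 2 / (a + b) ≤ (a - b) * log (a / b) := by
  have hlow : (a - b) / a ≤ log (a / b) := by
    have := one_sub_inv_le_log_of_pos (div_pos ha hb)
    rwa [inv_div, one_sub_div ha.ne'] at this
  have hup : log (a / b) ≤ (a - b) / b := by
    have := log_le_sub_one_of_pos (div_pos ha hb)
    rwa [div_sub_one hb.ne'] at this
  rcases le_total b a with hba | hab
  · calc (a - b) ^ 2 / (a + b) ≤ (a - b) ^ 2 / a := by gcongr; linarith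
      _ = (a - b) * ((a - b) / a) := by ring
      _ ≤ (a - b) * log (a / b) := mul_le_mul_of_nonneg_left hlow (sub_nonneg.mpr hba)
  · calc (a - b) ^ 2 / (a + b) ≤ (a - b) ^ 2 / b := by gcongr; linarith
      _ = (a - b) * ((a - b) / b) := by ring
      _ ≤ (a - b) * log (a / b) := mul_le_mul_of_nonpos_left hup (sub_nonpos.mpr hab)

theorem mul_log_mixture_le_of_pos {a b r : ℝ} (hr : |r| ≤ 1 / 2) (ha : 0 < a) (hb : 0 < b) :
    (1 / 2 * a + 1 / 2 * b) * log ((1 / 2 * a + 1 / 2 * b) / ((1 + r) / 2 * a + (1 - r) / 2 * b))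
      ≤ -(r / 2) * (a - b) + r ^ 2 / 2 * ((a - b) ^ 2 / (a + b)) := by
  have hab : 0 < a + b := by linarith
  set X := r * (a - b) / (a + b) with hX
  have hXabs : |X| ≤ 1 / 2 := by
    have : |a - b| ≤ a + b := abs_le.mpr ⟨by linarith, by linarith⟩
    rw [hX, abs_div, abs_of_pos hab, div_le_iff₀ hab, abs_mul]
    gcongr
  have hratio : (1 / 2 * a + 1 / 2 * b) / ((1 + r) / 2 * a + (1 - r) / 2 * b) = (1 + X)⁻¹ := by
    have : (1 + r) / 2 * a + (1 - r) / 2 * b = (1 / 2 * a + 1 / 2 * b) * (1 + X) := by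
      rw [hX]; field_simp; ring
    rw [this, div_mul_cancel_left₀ (by positivity)]
  calc _ = (1 / 2 * a + 1 / 2 * b) * -log (1 + X) := by rw [hratio, log_inv]
    _ ≤ (1 / 2 * a + 1 / 2 * b) * (X ^ 2 - X) := by
        gcongr; linarith [sub_sq_le_log_one_add hXabs]
    _ = -(r / 2) * (a - b) + r ^ 2 / 2 * ((a - b) ^ 2 / (a + b)) := by
        rw [hX]; field_simp; ring

theorem mul_log_mixture_le {a b r : ℝ} (hr : |r| ≤ 1 / 2) (ha : 0 ≤ a) (hb : 0 ≤ b)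
    (hab : a = 0 ↔ b = 0) :
    (1 / 2 * a + 1 / 2 * b) * log ((1 / 2 * a + 1 / 2 * b) / ((1 + r) / 2 * a + (1 - r) / 2 * b))
      ≤ -(r / 2) * (a - b) + r ^ 2 / 2 * ((a - b) * log (a / b)) := by
  rcases ha.eq_or_lt with rfl | ha
  · simp [hab.mp rfl]
  have hb : 0 < b := hb.lt_of_ne' fun hb0 => ha.ne' (hab.mpr hb0)
  calc _ ≤ -(r / 2) * (a - b) + r ^ 2 / 2 * ((a - b) ^ 2 / (a + b)) :=
        mul_log_mixture_le_of_pos hr ha hb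
    _ ≤ -(r / 2) * (a - b) + r ^ 2 / 2 * ((a - b) * log (a / b)) := by
        gcongr; exact sq_sub_div_add_le_sub_mul_log_div ha hb

theorem mul_logb_add_mul_logb_swap (a b : ℝ) :
    a * logb 2 (a / b) + b * logb 2 (b / a) = (a - b) * log (a / b) / log 2 := by
  rw [logb, logb, ← inv_div a b, log_inv]; ring

/-- `D_KL((μ+ν)/2 ‖ (1+r)/2·μ + (1-r)/2·ν) ≤ (r²/2)(D_KL(μ‖ν)+D_KL(ν‖μ))` for `|r| < 1/2`
    (KL divergences in bits; distributions with common support so the right side is finite). -/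
theorem dkl_mixture_bias_le {Ω : Type*} [Fintype Ω] (μ ν : Ω → ℝ) (r : ℝ)
    (hr : |r| < 1/2)
    (hμ0 : ∀ x, 0 ≤ μ x) (hμ1 : ∑ x, μ x = 1)
    (hν0 : ∀ x, 0 ≤ ν x) (hν1 : ∑ x, ν x = 1)
    (hsupp : ∀ x, μ x = 0 ↔ ν x = 0) :
    ∑ x, ((1:ℝ)/2 * μ x + 1/2 * ν x) *
        Real.logb 2 ((1/2 * μ x + 1/2 * ν x) / ((1 + r)/2 * μ x + (1 - r)/2 * ν x))
      ≤ r ^ 2 / 2 *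
        (∑ x, μ x * Real.logb 2 (μ x / ν x) + ∑ x, ν x * Real.logb 2 (ν x / μ x)) := by
  have hlinear : ∑ x, -(r / 2) * (μ x - ν x) = 0 := by
    rw [← Finset.mul_sum, Finset.sum_sub_distrib, hμ1, hν1, sub_self, mul_zero]
  simp only [← Finset.sum_add_distrib, mul_logb_add_mul_logb_swap]
  simp only [logb, mul_div_assoc', ← Finset.sum_div]
  gcongr
  calc _ ≤ ∑ x, (-(r / 2) * (μ x - ν x) + r ^ 2 / 2 * ((μ x - ν x) * log (μ x / ν x))) :=
        Finset.sum_le_sum fun x _ => mul_log_mixture_le hr.le (hμ0 x) (hν0 x) (hsupp x)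
    _ = _ := by rw [Finset.sum_add_distrib, hlinear, zero_add, Finset.mul_sum]
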